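/- arXiv:2107.04322 — 2 statements merged into one kernel-verified Lean document; each statement's English description precedes it below -/
import Mathlib

section
/- The number of k-matchings in the cycle graph C_n on n ≥ 3 vertices equals (n/k)·C(n−k−1, k−1), for any positive integer k with 2k ≤ n. -/
open Finset

namespace PaperMatching

open scoped Classical

variable {V : Type*}

/-- The number of `k`-matchings of `G`: sets of `k` pairwise vertex-disjoint edges. -/
noncomputable def pM (G : SimpleGraph V) [Fintype V] (k : ℕ) : ℕ :=
  ((G.edgeFinset.powersetCard k).filter
    (fun s => ∀ e ∈ s, ∀ f ∈ s, e ≠ f → ∀ v : V, ¬(v ∈ e ∧ v ∈ f))).card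

/-- First general Zagreb index `∑ deg(v)^k`. -/
noncomputable def M1gen (G : SimpleGraph V) [Fintype V] (k : ℕ) : ℕ :=
  ∑ v : V, (G.degree v) ^ k

/-- First Zagreb index. -/
noncomputable def M1 (G : SimpleGraph V) [Fintype V] : ℕ := M1gen G 2

/-- Forgotten index. -/
noncomputable def Fidx (G : SimpleGraph V) [Fintype V] : ℕ := M1gen G 3

/-- Second Zagreb index `∑_{uv ∈ E} deg(u) deg(v)`. -/
noncomputable def M2 (G : SimpleGraph V) [Fintype V] : ℕ :=
  ∑ e ∈ G.edgeFinset,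
    Sym2.lift ⟨fun u v => G.degree u * G.degree v, fun u v => by ring⟩ e

/-- `α(G) = ∑_{uv ∈ E} deg(u) deg(v) (deg(u) + deg(v))`. -/
noncomputable def alphaI (G : SimpleGraph V) [Fintype V] : ℕ :=
  ∑ e ∈ G.edgeFinset,
    Sym2.lift ⟨fun u v => G.degree u * G.degree v * (G.degree u + G.degree v),
      fun u v => by ring⟩ e

/-- `α₂(G) = ∑_{uv ∈ E} deg(u) deg(v) (deg(u)² + deg(v)²)`. -/
noncomputable def alpha2 (G : SimpleGraph V) [Fintype V] : ℕ :=
  ∑ e ∈ G.edgeFinset,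
    Sym2.lift ⟨fun u v => G.degree u * G.degree v * (G.degree u ^ 2 + G.degree v ^ 2),
      fun u v => by ring⟩ e

/-- Sum of the degrees of the two endpoints of an edge. -/
noncomputable def degSum (G : SimpleGraph V) [Fintype V] (e : Sym2 V) : ℕ :=
  Sym2.lift ⟨fun u v => G.degree u + G.degree v, fun u v => by ring⟩ e

/-- Edge degree `deg(e) = deg(u) + deg(v) - 2` for `e = uv`, as a rational number. -/
noncomputable def degE (G : SimpleGraph V) [Fintype V] (e : Sym2 V) : ℚ :=
  (degSum G e : ℚ) - 2

/-- Ordered pairs of distinct incident edges. -/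
noncomputable def incPairs (G : SimpleGraph V) [Fintype V] : Finset (Sym2 V × Sym2 V) :=
  (G.edgeFinset ×ˢ G.edgeFinset).filter (fun p => p.1 ≠ p.2 ∧ ∃ v : V, v ∈ p.1 ∧ v ∈ p.2)

/-- First reformulated Zagreb index `EM₁(G) = ∑_e deg(e)²`. -/
noncomputable def EM1 (G : SimpleGraph V) [Fintype V] : ℚ :=
  ∑ e ∈ G.edgeFinset, (degE G e) ^ 2

/-- Second reformulated Zagreb index `EM₂(G) = ∑_{e ∼ f} deg(e) deg(f)`, the sum being over
unordered pairs of distinct incident edges (encoded as half the sum over ordered pairs). -/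
noncomputable def EM2 (G : SimpleGraph V) [Fintype V] : ℚ :=
  (∑ p ∈ incPairs G, degE G p.1 * degE G p.2) / 2

/-- `β(G) = ∑_{e ∼ f} deg(e ∩ f) (deg(e) + deg(f))` over unordered pairs of distinct incident
edges, where `e ∩ f` is the common vertex (encoded as half the sum over ordered pairs, the inner
sum running over the unique common vertex). -/
noncomputable def betaI (G : SimpleGraph V) [Fintype V] : ℚ :=
  (∑ p ∈ incPairs G, ∑ v ∈ univ.filter (fun v : V => v ∈ p.1 ∧ v ∈ p.2),
      (G.degree v : ℚ) * (degE G p.1 + degE G p.2)) / 2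

/-- `γ(G) = ∑ deg(v)(deg(x)+deg(y))` over pairs of a vertex `v` and an edge `xy` with
`v ∉ {x,y}` and `v` adjacent to an endpoint of `xy`. -/
noncomputable def gammaI (G : SimpleGraph V) [Fintype V] : ℕ :=
  ∑ v : V, ∑ e ∈ G.edgeFinset,
    if v ∉ e ∧ ∃ w ∈ e, G.Adj v w then G.degree v * degSum G e else 0

/-- The graph obtained from `G` by deleting both endpoints of the edge `e` (kept on the same
vertex type; the deleted vertices become isolated). -/
def edel (G : SimpleGraph V) (e : Sym2 V) : SimpleGraph V where
  Adj a b := G.Adj a b ∧ a ∉ e ∧ b ∉ e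
  symm := ⟨fun a b ⟨h, ha, hb⟩ => ⟨h.symm, hb, ha⟩⟩
  loopless := ⟨fun a ⟨h, _, _⟩ => G.irrefl h⟩

/-- The star graph on `n` vertices: vertex `0` is adjacent to all others. -/
def starGraph (n : ℕ) : SimpleGraph (Fin n) where
  Adj a b := a ≠ b ∧ (a.val = 0 ∨ b.val = 0)
  symm := ⟨fun a b ⟨h, h0⟩ => ⟨h.symm, h0.symm⟩⟩
  loopless := ⟨fun a ⟨h, _⟩ => h rfl⟩


section CycleAux

def spread (S : Finset ℕ) : Prop := ∀ i ∈ S, i + 1 ∉ S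

noncomputable def pathSets (a b k : ℕ) : Finset (Finset ℕ) :=
  ((Finset.Ico a b).powersetCard k).filter spread

lemma mem_pathSets {a b k : ℕ} {S : Finset ℕ} :
    S ∈ pathSets a b k ↔ (S ⊆ Finset.Ico a b ∧ S.card = k) ∧ spread S := by
  simp [pathSets, Finset.mem_powersetCard]

lemma pathSets_card : ∀ b a k : ℕ, (pathSets a b k).card = Nat.choose (b - a + 1 - k) k := by
  intro b
  induction b using Nat.strong_induction_on with
  | _ b IH =>
  intro a k
  rcases le_or_gt b a with hba | hab
  · -- Ico empty
    have hI : Finset.Ico a b = ∅ := Finset.Ico_eq_empty (by omega)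
    rcases Nat.eq_zero_or_pos k with rfl | hk
    · have : pathSets a b 0 = {∅} := by
        ext S; simp only [mem_pathSets, Finset.card_eq_zero, Finset.mem_singleton]
        constructor
        · rintro ⟨⟨-, rfl⟩, -⟩; rfl
        · rintro rfl; exact ⟨⟨by simp, rfl⟩, by simp [spread]⟩
      rw [this]; simp
    · have : pathSets a b k = ∅ := by
        ext S; simp only [mem_pathSets, hI, Finset.subset_empty, Finset.notMem_empty, iff_false]
        rintro ⟨⟨rfl, hc⟩, -⟩; simp at hc; omega
      rw [this]
      have : b - a + 1 - k = 0 ∨ k > b - a + 1 - k := by omega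
      rcases Nat.lt_or_ge (b - a + 1 - k) k with h | h
      · simp [Nat.choose_eq_zero_of_lt h]
      · omega
  · obtain ⟨b', rfl⟩ : ∃ b', b = b' + 1 := ⟨b - 1, by omega⟩
    have hab' : a ≤ b' := by omega
    rcases Nat.eq_zero_or_pos k with rfl | hk
    · have : pathSets a (b' + 1) 0 = {∅} := by
        ext S; simp [mem_pathSets, Finset.card_eq_zero]
        constructor
        · rintro ⟨⟨-, rfl⟩, -⟩; rfl
        · rintro rfl; exact ⟨⟨by simp, rfl⟩, by simp [spread]⟩
      rw [this]; simp
    obtain ⟨k', rfl⟩ : ∃ k', k = k' + 1 := ⟨k - 1, by omega⟩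
    -- split on b' ∈ S
    have hsplit := Finset.card_filter_add_card_filter_not
      (s := pathSets a (b' + 1) (k' + 1)) (p := fun S => b' ∈ S)
    have h1 : (pathSets a (b' + 1) (k' + 1)).filter (fun S => b' ∉ S) = pathSets a b' (k' + 1) := by
      ext S
      simp only [Finset.mem_filter, mem_pathSets]
      constructor
      · rintro ⟨⟨⟨hs, hc⟩, hsp⟩, hb⟩
        refine ⟨⟨fun x hx => ?_, hc⟩, hsp⟩
        have := hs hx; simp only [Finset.mem_Ico] at this ⊢
        have : x ≠ b' := fun h => hb (h ▸ hx)
        have := hs hx; simp only [Finset.mem_Ico] at this; omega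
      · rintro ⟨⟨hs, hc⟩, hsp⟩
        refine ⟨⟨⟨fun x hx => ?_, hc⟩, hsp⟩, fun hb => ?_⟩
        · have := hs hx; simp only [Finset.mem_Ico] at this ⊢; omega
        · have := hs hb; simp only [Finset.mem_Ico] at this; omega
    have h2 : ((pathSets a (b' + 1) (k' + 1)).filter (fun S => b' ∈ S)).card
        = (pathSets a (b' - 1) k').card := by
      refine Finset.card_bij' (fun S _ => S.erase b') (fun T _ => insert b' T) ?hi ?hj ?li ?ri
      case hi =>
        rintro S hS
        simp only [Finset.mem_filter, mem_pathSets] at hS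
        obtain ⟨⟨⟨hs, hc⟩, hsp⟩, hb⟩ := hS
        refine mem_pathSets.2 ⟨⟨fun x hx => ?_, ?_⟩, fun i hi => ?_⟩
        · obtain ⟨hxne, hxS⟩ := Finset.mem_erase.1 hx
          have hx1 := hs hxS; simp only [Finset.mem_Ico] at hx1 ⊢
          have : x + 1 ≠ b' := fun h => hsp x hxS (h ▸ hb)
          omega
        · rw [Finset.card_erase_of_mem hb, hc]; omega
        · obtain ⟨-, hiS⟩ := Finset.mem_erase.1 hi
          intro hmem
          exact hsp i hiS (Finset.mem_of_mem_erase hmem)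
      case hj =>
        rintro T hT
        rw [mem_pathSets] at hT
        obtain ⟨⟨hs, hc⟩, hsp⟩ := hT
        have hbT : b' ∉ T := fun h => by have := hs h; simp only [Finset.mem_Ico] at this; omega
        refine Finset.mem_filter.2 ⟨mem_pathSets.2 ⟨⟨fun x hx => ?_, ?_⟩, fun i hi hmem => ?_⟩,
          Finset.mem_insert_self _ _⟩
        · rcases Finset.mem_insert.1 hx with rfl | hx
          · simp only [Finset.mem_Ico]; omega
          · have := hs hx; simp only [Finset.mem_Ico] at this ⊢; omega
        · rw [Finset.card_insert_of_notMem hbT, hc]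
        · rcases Finset.mem_insert.1 hi with rfl | hiT
          · rcases Finset.mem_insert.1 hmem with h | h
            · omega
            · have := hs h; simp only [Finset.mem_Ico] at this; omega
          · rcases Finset.mem_insert.1 hmem with h | h
            · have := hs hiT; simp only [Finset.mem_Ico] at this; omega
            · exact hsp i hiT h
      case li =>
        intro S hS
        simp only [Finset.mem_filter] at hS
        exact Finset.insert_erase hS.2
      case ri =>
        intro T hT
        rw [mem_pathSets] at hT
        have hbT : b' ∉ T := fun h => by
          have := hT.1.1 h; simp only [Finset.mem_Ico] at this; omega
        exact Finset.erase_insert hbT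
    rw [h1] at hsplit
    rw [← hsplit, h2, IH b' (by omega), IH (b' - 1) (by omega)]
    -- arithmetic
    rcases Nat.lt_or_ge b' (a + 1) with hc | hc
    · -- b' = a
      have hba : b' = a := by omega
      subst hba
      rcases Nat.eq_zero_or_pos k' with rfl | hk'
      · simp
      · rw [Nat.choose_eq_zero_of_lt (by omega), Nat.choose_eq_zero_of_lt (by omega),
          Nat.choose_eq_zero_of_lt (by omega)]
    · -- b' ≥ a + 1
      have e2 : b' - 1 - a + 1 - k' = b' - a - k' := by omega
      rcases Nat.lt_or_ge (b' - a) k' with h | h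
      · rw [Nat.choose_eq_zero_of_lt (by omega), Nat.choose_eq_zero_of_lt (by omega),
          Nat.choose_eq_zero_of_lt (by omega)]
      · have e1 : b' - a + 1 - (k' + 1) = b' - a - k' := by omega
        have e3 : b' + 1 - a + 1 - (k' + 1) = (b' - a - k') + 1 := by omega
        rw [e1, e2, e3, Nat.choose_succ_succ, Nat.add_comm]


noncomputable def cycSets (n k : ℕ) : Finset (Finset ℕ) :=
  ((Finset.range n).powersetCard k).filter (fun S => ∀ i ∈ S, (i + 1) % n ∉ S)

lemma mem_cycSets {n k : ℕ} {S : Finset ℕ} :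
    S ∈ cycSets n k ↔ (S ⊆ Finset.range n ∧ S.card = k) ∧ ∀ i ∈ S, (i + 1) % n ∉ S := by
  simp [cycSets, Finset.mem_powersetCard]

lemma cycSets_card {n k : ℕ} (hn : 3 ≤ n) (hk : 1 ≤ k) (h2 : 2 * k ≤ n) :
    (cycSets n k).card = Nat.choose (n - k) k + Nat.choose (n - k - 1) (k - 1) := by
  have hsplit := Finset.card_filter_add_card_filter_not
    (s := cycSets n k) (p := fun S => 0 ∈ S)
  have h1 : (cycSets n k).filter (fun S => 0 ∉ S) = pathSets 1 n k := by
    ext S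
    simp only [Finset.mem_filter, mem_cycSets, mem_pathSets]
    constructor
    · rintro ⟨⟨⟨hs, hc⟩, hcir⟩, h0⟩
      refine ⟨⟨fun x hx => ?_, hc⟩, fun i hi hmem => ?_⟩
      · have := hs hx; simp only [Finset.mem_range] at this
        simp only [Finset.mem_Ico]
        have : x ≠ 0 := fun h => h0 (h ▸ hx); omega
      · have hiE := hs hi; have hmE := hs hmem
        simp only [Finset.mem_range] at hiE hmE
        exact hcir i hi (by rwa [Nat.mod_eq_of_lt (by omega)])
    · rintro ⟨⟨hs, hc⟩, hsp⟩
      have hsub : ∀ x ∈ S, 1 ≤ x ∧ x < n := by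
        intro x hx; have := hs hx; simpa using this
      refine ⟨⟨⟨fun x hx => by simpa using (hsub x hx).2, hc⟩, fun i hi hmem => ?_⟩, fun h0 => by
        have := (hsub 0 h0).1; omega⟩
      obtain ⟨hi1, hin⟩ := hsub i hi
      rcases Nat.lt_or_ge (i + 1) n with hlt | hge
      · rw [Nat.mod_eq_of_lt hlt] at hmem; exact hsp i hi hmem
      · have : i + 1 = n := by omega
        rw [this, Nat.mod_self] at hmem
        have := (hsub 0 hmem).1; omega
  have h2' : ((cycSets n k).filter (fun S => 0 ∈ S)).card = (pathSets 2 (n - 1) (k - 1)).card := by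
    refine Finset.card_bij' (fun S _ => S.erase 0) (fun T _ => insert 0 T) ?hi ?hj ?li ?ri
    case hi =>
      rintro S hS
      simp only [Finset.mem_filter, mem_cycSets] at hS
      obtain ⟨⟨⟨hs, hc⟩, hcir⟩, h0⟩ := hS
      have hn1 : n - 1 ∉ S := by
        intro hmem
        have := hcir (n - 1) hmem
        rw [(by omega : n - 1 + 1 = n), Nat.mod_self] at this
        exact this h0
      have h1S : 1 ∉ S := by
        have := hcir 0 h0
        rwa [Nat.mod_eq_of_lt (by omega)] at this
      refine mem_pathSets.2 ⟨⟨fun x hx => ?_, ?_⟩, fun i hi hmem => ?_⟩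
      · obtain ⟨hxne, hxS⟩ := Finset.mem_erase.1 hx
        have := hs hxS; simp only [Finset.mem_range] at this
        simp only [Finset.mem_Ico]
        have : x ≠ 1 := fun h => h1S (h ▸ hxS)
        have : x ≠ n - 1 := fun h => hn1 (h ▸ hxS)
        omega
      · rw [Finset.card_erase_of_mem h0, hc]
      · obtain ⟨hine, hiS⟩ := Finset.mem_erase.1 hi
        have hiE := hs hiS; simp only [Finset.mem_range] at hiE
        have hiN1 : i ≠ n - 1 := fun h => hn1 (h ▸ hiS)
        have := hcir i hiS
        rw [Nat.mod_eq_of_lt (by omega)] at this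
        exact this (Finset.mem_of_mem_erase hmem)
    case hj =>
      rintro T hT
      rw [mem_pathSets] at hT
      obtain ⟨⟨hs, hc⟩, hsp⟩ := hT
      have hsub : ∀ x ∈ T, 2 ≤ x ∧ x < n - 1 := by
        intro x hx; have := hs hx; simpa using this
      have h0T : 0 ∉ T := fun h => by have := (hsub 0 h).1; omega
      refine Finset.mem_filter.2 ⟨mem_cycSets.2 ⟨⟨fun x hx => ?_, ?_⟩, fun i hi hmem => ?_⟩,
        Finset.mem_insert_self _ _⟩
      · rcases Finset.mem_insert.1 hx with rfl | hx
        · simp only [Finset.mem_range]; omega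
        · have := (hsub x hx).2; simp only [Finset.mem_range]; omega
      · rw [Finset.card_insert_of_notMem h0T, hc]; omega
      · rcases Finset.mem_insert.1 hi with rfl | hiT
        · rw [Nat.mod_eq_of_lt (by omega)] at hmem
          rcases Finset.mem_insert.1 hmem with h | h
          · omega
          · have := (hsub 1 h).1; omega
        · obtain ⟨hi2, hin⟩ := hsub i hiT
          rw [Nat.mod_eq_of_lt (by omega)] at hmem
          rcases Finset.mem_insert.1 hmem with h | h
          · omega
          · exact hsp i hiT h
    case li =>
      intro S hS
      simp only [Finset.mem_filter] at hS
      exact Finset.insert_erase hS.2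
    case ri =>
      intro T hT
      rw [mem_pathSets] at hT
      have h0T : 0 ∉ T := fun h => by
        have := hT.1.1 h; simp only [Finset.mem_Ico] at this; omega
      exact Finset.erase_insert h0T
  rw [h1] at hsplit
  rw [← hsplit, h2', pathSets_card, pathSets_card]
  have e1 : n - 1 + 1 - k = n - k := by omega
  have e2 : n - 1 - 2 + 1 - (k - 1) = n - k - 1 := by omega
  rw [e1, e2, Nat.add_comm]


open SimpleGraph
open Fin.NatCast

variable {m : ℕ}

noncomputable def g (m : ℕ) (i : ℕ) : Sym2 (Fin (m + 3)) :=
  s((i : Fin (m + 3)), (i : Fin (m + 3)) + 1)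

lemma val_coe (i : ℕ) (h : i < m + 3) : ((i : Fin (m + 3))).val = i := by
  rw [Fin.val_natCast i (n := m + 3), Nat.mod_eq_of_lt h]

lemma succ_val (i : ℕ) (h : i < m + 3) : (((i : Fin (m + 3))) + 1).val = (i + 1) % (m + 3) := by
  rw [Fin.val_add, Fin.val_one, val_coe i h]

lemma two_step (u : Fin (m + 3)) (h : u = u + 1 + 1) : False := by
  rw [add_assoc] at h
  have h2 : (1 + 1 : Fin (m + 3)) = 0 := left_eq_add.mp h
  have h3 := congrArg Fin.val h2
  rw [Fin.val_add, Fin.val_one, Fin.val_zero, Nat.mod_eq_of_lt (by omega)] at h3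
  omega

lemma g_adj (i : ℕ) : (cycleGraph (m + 3)).Adj (i : Fin (m + 3)) ((i : Fin (m + 3)) + 1) := by
  rw [cycleGraph_adj']
  right
  rw [add_sub_cancel_left, Fin.val_one]

lemma edge_form {e : Sym2 (Fin (m + 3))} (he : e ∈ (cycleGraph (m + 3)).edgeSet) :
    ∃ u : Fin (m + 3), e = s(u, u + 1) := by
  induction e with
  | _ a b =>
    rw [mem_edgeSet, cycleGraph_adj'] at he
    rcases he with h | h
    · have h' : a - b = 1 := Fin.val_injective (by rw [h, Fin.val_one])
      rw [sub_eq_iff_eq_add] at h'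
      exact ⟨b, by rw [h', add_comm 1 b, Sym2.eq_swap]⟩
    · have h' : b - a = 1 := Fin.val_injective (by rw [h, Fin.val_one])
      rw [sub_eq_iff_eq_add] at h'
      exact ⟨a, by rw [h', add_comm 1 a]⟩

lemma g_inj {i j : ℕ} (hi : i < m + 3) (hj : j < m + 3) (h : g m i = g m j) : i = j := by
  unfold g at h
  rw [Sym2.eq_iff] at h
  rcases h with ⟨h1, -⟩ | ⟨h1, h2⟩
  · have := congrArg Fin.val h1
    rw [val_coe i hi, val_coe j hj] at this; exact this
  · exfalso
    exact two_step (i : Fin (m + 3)) (h1.trans (by rw [← h2]))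

lemma g_mem {v : Fin (m + 3)} {i : ℕ} :
    v ∈ g m i ↔ v = (i : Fin (m + 3)) ∨ v = (i : Fin (m + 3)) + 1 := Sym2.mem_iff

lemma coe_succ_eq {i j : ℕ} (hi : i < m + 3) (hj : j < m + 3) (h : j = (i + 1) % (m + 3)) :
    (j : Fin (m + 3)) = (i : Fin (m + 3)) + 1 := by
  apply Fin.val_injective
  rw [val_coe j hj, succ_val i hi, h]

lemma shared_iff {i j : ℕ} (hi : i < m + 3) (hj : j < m + 3) (hij : i ≠ j) :
    (∃ v : Fin (m + 3), v ∈ g m i ∧ v ∈ g m j) ↔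
      j = (i + 1) % (m + 3) ∨ i = (j + 1) % (m + 3) := by
  constructor
  · rintro ⟨v, hvi, hvj⟩
    rw [g_mem] at hvi hvj
    rcases hvi with rfl | rfl <;> rcases hvj with h | h
    · exact absurd (g_inj hi hj (by unfold g; rw [h])) hij
    · right
      have := congrArg Fin.val h
      rw [val_coe i hi, succ_val j hj] at this; exact this
    · left
      have := congrArg Fin.val h.symm
      rw [val_coe j hj, succ_val i hi] at this; exact this
    · have h1 : (i : Fin (m + 3)) = (j : Fin (m + 3)) := by
        have := add_right_cancel h; rw [this]
      have := congrArg Fin.val h1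
      rw [val_coe i hi, val_coe j hj] at this; exact absurd this hij
  · rintro (h | h)
    · exact ⟨(i : Fin (m + 3)) + 1, g_mem.2 (Or.inr rfl), g_mem.2 (Or.inl (coe_succ_eq hi hj h).symm)⟩
    · exact ⟨(j : Fin (m + 3)) + 1, g_mem.2 (Or.inl (coe_succ_eq hj hi h).symm), g_mem.2 (Or.inr rfl)⟩

lemma succ_mod_ne (i : ℕ) (hi : i < m + 3) : (i + 1) % (m + 3) ≠ i := by
  rcases Nat.lt_or_ge (i + 1) (m + 3) with h | h
  · rw [Nat.mod_eq_of_lt h]; omega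
  · have : i + 1 = m + 3 := by omega
    rw [this, Nat.mod_self]; omega

noncomputable def pMset (m k : ℕ) : Finset (Finset (Sym2 (Fin (m + 3)))) :=
  (((cycleGraph (m + 3)).edgeFinset.powersetCard k).filter
    (fun s => ∀ e ∈ s, ∀ f ∈ s, e ≠ f → ∀ v : Fin (m + 3), ¬(v ∈ e ∧ v ∈ f)))

lemma pM_eq_pMset (k : ℕ) : pM (cycleGraph (m + 3)) k = (pMset m k).card := by
  unfold pM pMset
  apply congrArg Finset.card
  ext s
  simp only [Finset.mem_filter, Finset.mem_powersetCard, mem_edgeFinset]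
  constructor
  · rintro ⟨⟨h1, h2⟩, h3⟩
    exact ⟨⟨fun e he => by simpa using h1 he, h2⟩, h3⟩
  · rintro ⟨⟨h1, h2⟩, h3⟩
    exact ⟨⟨fun e he => by simpa using h1 he, h2⟩, h3⟩

lemma bij_card (k : ℕ) : (cycSets (m + 3) k).card = (pMset m k).card := by
  unfold pMset
  apply Finset.card_bij (fun S _ => S.image (g m))
  · -- maps to
    intro S hS
    rw [mem_cycSets] at hS
    obtain ⟨⟨hs, hc⟩, hcir⟩ := hS
    have hlt : ∀ i ∈ S, i < m + 3 := fun i hi => by simpa using hs hi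
    rw [Finset.mem_filter, Finset.mem_powersetCard]
    refine ⟨⟨fun e he => ?_, ?_⟩, ?_⟩
    · obtain ⟨i, hiS, rfl⟩ := Finset.mem_image.1 he
      rw [mem_edgeFinset]
      exact g_adj i
    · rw [Finset.card_image_of_injOn (fun i hi j hj => g_inj (hlt i hi) (hlt j hj)), hc]
    · intro e he f hf hef v hv
      obtain ⟨i, hiS, rfl⟩ := Finset.mem_image.1 he
      obtain ⟨j, hjS, rfl⟩ := Finset.mem_image.1 hf
      have hij : i ≠ j := fun h => hef (by rw [h])
      have := (shared_iff (hlt i hiS) (hlt j hjS) hij).1 ⟨v, hv⟩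
      rcases this with h | h
      · exact hcir i hiS (h ▸ hjS)
      · exact hcir j hjS (h ▸ hiS)
  · -- injective
    intro S hS T hT h
    rw [mem_cycSets] at hS hT
    have hltS : ∀ i ∈ S, i < m + 3 := fun i hi => by simpa using hS.1.1 hi
    have hltT : ∀ i ∈ T, i < m + 3 := fun i hi => by simpa using hT.1.1 hi
    ext i
    constructor
    · intro hi
      have : g m i ∈ T.image (g m) := h ▸ Finset.mem_image_of_mem _ hi
      obtain ⟨j, hjT, hji⟩ := Finset.mem_image.1 this
      rwa [← g_inj (hltT j hjT) (hltS i hi) hji]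
    · intro hi
      have : g m i ∈ S.image (g m) := h.symm ▸ Finset.mem_image_of_mem _ hi
      obtain ⟨j, hjS, hji⟩ := Finset.mem_image.1 this
      rwa [← g_inj (hltS j hjS) (hltT i hi) hji]
  · -- surjective
    intro M hM
    rw [Finset.mem_filter, Finset.mem_powersetCard] at hM
    obtain ⟨⟨hsub, hcard⟩, hmatch⟩ := hM
    refine ⟨(Finset.range (m + 3)).filter (fun i => g m i ∈ M), ?_, ?_⟩
    · rw [mem_cycSets]
      have himg : ((Finset.range (m + 3)).filter (fun i => g m i ∈ M)).image (g m) = M := by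
        apply Finset.Subset.antisymm
        · intro e he
          obtain ⟨i, hi, rfl⟩ := Finset.mem_image.1 he
          exact (Finset.mem_filter.1 hi).2
        · intro e he
          have := hsub he
          rw [mem_edgeFinset] at this
          obtain ⟨u, rfl⟩ := edge_form this
          have : g m u.val = s(u, u + 1) := by
            unfold g; rw [Fin.cast_val_eq_self]
          refine Finset.mem_image.2 ⟨u.val, Finset.mem_filter.2 ⟨Finset.mem_range.2 u.isLt, ?_⟩, this⟩
          rw [this]; exact he
      refine ⟨⟨Finset.filter_subset _ _ |>.trans ?_, ?_⟩, ?_⟩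
      · exact fun x hx => hx
      · have hinjOn : Set.InjOn (g m)
            ((Finset.range (m + 3)).filter (fun i => g m i ∈ M)) := by
          intro i hi j hj
          exact g_inj (by simpa using (Finset.mem_filter.1 hi).1)
            (by simpa using (Finset.mem_filter.1 hj).1)
        rw [← Finset.card_image_of_injOn hinjOn, himg, hcard]
      · intro i hi hmem
        have hiR := (Finset.mem_filter.1 hi).1
        have hiM := (Finset.mem_filter.1 hi).2
        have hjR := (Finset.mem_filter.1 hmem).1
        have hjM := (Finset.mem_filter.1 hmem).2
        rw [Finset.mem_range] at hiR hjR
        have hij : i ≠ (i + 1) % (m + 3) := fun h => succ_mod_ne i hiR h.symm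
        have hne : g m i ≠ g m ((i + 1) % (m + 3)) := fun h => hij (g_inj hiR hjR h)
        obtain ⟨v, hv1, hv2⟩ := (shared_iff hiR hjR hij).2 (Or.inl rfl)
        exact hmatch (g m i) hiM (g m ((i + 1) % (m + 3))) hjM hne v ⟨hv1, hv2⟩
    · apply Finset.Subset.antisymm
      · intro e he
        obtain ⟨i, hi, rfl⟩ := Finset.mem_image.1 he
        exact (Finset.mem_filter.1 hi).2
      · intro e he
        have := hsub he
        rw [mem_edgeFinset] at this
        obtain ⟨u, rfl⟩ := edge_form this
        have hgu : g m u.val = s(u, u + 1) := by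
          unfold g; rw [Fin.cast_val_eq_self]
        refine Finset.mem_image.2 ⟨u.val, Finset.mem_filter.2 ⟨Finset.mem_range.2 u.isLt, ?_⟩, hgu⟩
        rw [hgu]; exact he

lemma key_id (n k : ℕ) (hk : 1 ≤ k) (h : 2 * k ≤ n) :
    (n - k) * Nat.choose (n - k - 1) (k - 1) = Nat.choose (n - k) k * k := by
  obtain ⟨a, ha⟩ : ∃ a, n - k = a + 1 := ⟨n - k - 1, by omega⟩
  obtain ⟨b, hb⟩ : ∃ b, k = b + 1 := ⟨k - 1, by omega⟩
  rw [ha, hb]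
  simp only [Nat.add_sub_cancel]
  exact Nat.add_one_mul_choose_eq a b


end CycleAux

theorem cycle_matchings (n k : ℕ) (hn : 3 ≤ n) (hk : 1 ≤ k) (h : 2 * k ≤ n) :
    (pM (SimpleGraph.cycleGraph n) k : ℚ) =
      ((n : ℚ) / (k : ℚ)) * (Nat.choose (n - k - 1) (k - 1) : ℚ) := by
  obtain ⟨m, rfl⟩ : ∃ m, n = m + 3 := ⟨n - 3, by omega⟩
  have hcount : pM (SimpleGraph.cycleGraph (m + 3)) k
      = Nat.choose (m + 3 - k) k + Nat.choose (m + 3 - k - 1) (k - 1) := by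
    rw [pM_eq_pMset, ← bij_card, cycSets_card hn hk h]
  have h1 := key_id (m + 3) k hk h
  rw [hcount]
  have hk0 : (k : ℚ) ≠ 0 := by positivity
  rw [div_mul_eq_mul_div, eq_div_iff hk0]
  have h1q : ((m : ℚ) + 3 - k) * (Nat.choose (m + 3 - k - 1) (k - 1) : ℚ)
      = (Nat.choose (m + 3 - k) k : ℚ) * k := by
    have := congrArg (fun x : ℕ => (x : ℚ)) h1
    push_cast [Nat.cast_sub (by omega : k ≤ m + 3)] at this
    convert this using 2 <;> push_cast <;> ring
  push_cast
  linear_combination (-1 : ℚ) * h1q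


end PaperMatching
end

section
/- For any simple graph G with girth at least 4 and m edges, Σ_{uv∈E(G)} M₁(G−{u,v}) = (m+3)M₁(G) − F(G) − 4M₂(G) − 2m, where the sum is over edges uv and G−{u,v} deletes both endpoints. -/
open Finset

namespace PaperMatching

open scoped Classical

variable {V : Type*}

section Aux

variable {V : Type*} [Fintype V] (G : SimpleGraph V)

lemma edel_adj (e : Sym2 V) (a b : V) :
    (edel G e).Adj a b ↔ G.Adj a b ∧ a ∉ e ∧ b ∉ e := Iff.rfl

omit [Fintype V] in
lemma triangle_free_of_egirth (hg : (4 : ℕ∞) ≤ G.egirth) {x y z : V}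
    (hxy : G.Adj x y) (hyz : G.Adj y z) (hxz : G.Adj x z) : False := by
  have hzx := hxz.symm
  have n1 := hxy.ne; have n2 := hyz.ne; have n3 := hxz.ne
  set w : G.Walk x x := .cons hxy (.cons hyz (.cons hzx .nil)) with hw
  have hc : w.IsCycle := by
    constructor
    · constructor
      · rw [SimpleGraph.Walk.isTrail_def]
        simp [hw, Sym2.eq_iff]
        tauto
      · simp [hw]
    · simp [hw]
      tauto
  have := SimpleGraph.le_egirth.mp hg x w hc
  rw [hw] at this
  simp at this
  exact absurd this (by norm_num)

lemma sum_pairs_nbhd (f : V → V → ℚ) :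
    ∑ p ∈ (univ ×ˢ univ).filter (fun p : V × V => G.Adj p.1 p.2), f p.1 p.2
      = ∑ v : V, ∑ u ∈ G.neighborFinset v, f v u := by
  rw [Finset.sum_filter, Finset.sum_product]
  refine Finset.sum_congr rfl fun v _ => ?_
  rw [SimpleGraph.neighborFinset_eq_filter, Finset.sum_filter]

lemma sum_pairs_edges (f : V → V → ℚ) (hf : ∀ u v, f u v = f v u) :
    ∑ p ∈ (univ ×ˢ univ).filter (fun p : V × V => G.Adj p.1 p.2), f p.1 p.2
      = 2 * ∑ e ∈ G.edgeFinset, Sym2.lift ⟨f, hf⟩ e := by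
  rw [Finset.mul_sum, ← Finset.sum_fiberwise_of_maps_to
    (g := fun p : V × V => s(p.1, p.2)) (t := G.edgeFinset)
    (fun p hp => by
      simp only [mem_filter, mem_product] at hp
      simpa [SimpleGraph.mem_edgeFinset] using hp.2)]
  refine Finset.sum_congr rfl fun e he => ?_
  induction e with
  | _ x y =>
    rw [SimpleGraph.mem_edgeFinset, SimpleGraph.mem_edgeSet] at he
    have hfil : ((univ ×ˢ univ).filter (fun p : V × V => G.Adj p.1 p.2)).filter
        (fun p => s(p.1, p.2) = s(x, y)) = {(x, y), (y, x)} := by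
      ext ⟨a, b⟩
      simp only [mem_filter, mem_product, mem_univ, true_and, mem_insert, mem_singleton,
        Prod.mk.injEq, Sym2.eq_iff]
      constructor
      · rintro ⟨_, (⟨rfl, rfl⟩ | ⟨rfl, rfl⟩)⟩ <;> tauto
      · rintro (⟨rfl, rfl⟩ | ⟨rfl, rfl⟩) <;> simp [he, he.symm]
    rw [hfil, Finset.sum_pair (by
      simp only [ne_eq, Prod.mk.injEq, not_and]
      exact fun h _ => he.ne h)]
    simp [Sym2.lift_mk, hf y x]
    ring

lemma two_mul_sum_edges (f : V → V → ℚ) (hf : ∀ u v, f u v = f v u) :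
    2 * ∑ e ∈ G.edgeFinset, Sym2.lift ⟨f, hf⟩ e
      = ∑ v : V, ∑ u ∈ G.neighborFinset v, f v u := by
  rw [← sum_pairs_edges G f hf, sum_pairs_nbhd]

lemma sum_nbhd_swap (h : V → ℚ) :
    ∑ v : V, ∑ u ∈ G.neighborFinset v, h u = ∑ v : V, (G.degree v : ℚ) * h v := by
  simp only [SimpleGraph.neighborFinset_eq_filter, Finset.sum_filter]
  rw [Finset.sum_comm]
  refine Finset.sum_congr rfl fun u _ => ?_
  have hset : (univ.filter fun v : V => G.Adj v u) = G.neighborFinset u := by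
    ext v
    simp only [mem_filter, mem_univ, true_and, SimpleGraph.mem_neighborFinset]
    constructor <;> exact fun h => h.symm
  rw [← Finset.sum_filter, hset, Finset.sum_const, nsmul_eq_mul,
    SimpleGraph.card_neighborFinset_eq_degree]

lemma edel_degree (hTF : ∀ {x y z : V}, G.Adj x y → G.Adj y z → G.Adj x z → False)
    {x y : V} (hxy : G.Adj x y) (v : V) :
    ((edel G s(x, y)).degree v : ℚ) =
      if v = x ∨ v = y then 0
      else (G.degree v : ℚ) -
        ((if G.Adj x v then (1 : ℚ) else 0) + (if G.Adj y v then (1 : ℚ) else 0)) := by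
  by_cases hv : v = x ∨ v = y
  · rw [if_pos hv]
    norm_cast
    rw [← SimpleGraph.card_neighborFinset_eq_degree]
    convert Finset.card_empty
    ext u
    simp only [SimpleGraph.mem_neighborFinset, edel_adj, Sym2.mem_iff, Finset.notMem_empty,
      iff_false, not_and, not_not]
    intro _ h
    exact absurd hv h
  · rw [if_neg hv]
    push_neg at hv
    have hN : (edel G s(x, y)).neighborFinset v = ((G.neighborFinset v).erase x).erase y := by
      ext u
      simp only [SimpleGraph.mem_neighborFinset, edel_adj, Sym2.mem_iff, Finset.mem_erase]
      constructor
      · rintro ⟨ha, -, hu⟩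
        push_neg at hu
        exact ⟨hu.2, hu.1, ha⟩
      · rintro ⟨h2, h1, ha⟩
        exact ⟨ha, by push_neg; exact hv, by push_neg; exact ⟨h1, h2⟩⟩
    rw [← SimpleGraph.card_neighborFinset_eq_degree, hN]
    by_cases hx : G.Adj x v <;> by_cases hy : G.Adj y v
    · exact absurd (hTF hx hy.symm hxy) (fun h => h)
    · have hymem : y ∉ (G.neighborFinset v).erase x := by
        simp only [Finset.mem_erase, SimpleGraph.mem_neighborFinset]
        rintro ⟨-, h⟩
        exact hy h.symm
      rw [Finset.erase_eq_of_notMem hymem,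
        Finset.card_erase_of_mem (by simpa [SimpleGraph.mem_neighborFinset] using hx.symm)]
      have h1 : 1 ≤ #(G.neighborFinset v) :=
        Finset.card_pos.mpr ⟨x, by simpa [SimpleGraph.mem_neighborFinset] using hx.symm⟩
      rw [if_pos hx, if_neg hy, Nat.cast_sub h1, SimpleGraph.card_neighborFinset_eq_degree]
      push_cast; ring
    · have hxmem : x ∉ G.neighborFinset v := by
        simp only [SimpleGraph.mem_neighborFinset]
        exact fun h => hx h.symm
      rw [Finset.erase_eq_of_notMem hxmem,
        Finset.card_erase_of_mem (by simpa [SimpleGraph.mem_neighborFinset] using hy.symm)]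
      have h1 : 1 ≤ #(G.neighborFinset v) :=
        Finset.card_pos.mpr ⟨y, by simpa [SimpleGraph.mem_neighborFinset] using hy.symm⟩
      rw [if_neg hx, if_pos hy, Nat.cast_sub h1, SimpleGraph.card_neighborFinset_eq_degree]
      push_cast; ring
    · have hxmem : x ∉ G.neighborFinset v := by
        simp only [SimpleGraph.mem_neighborFinset]
        exact fun h => hx h.symm
      have hymem : y ∉ (G.neighborFinset v).erase x := by
        simp only [Finset.mem_erase, SimpleGraph.mem_neighborFinset]
        rintro ⟨-, h⟩
        exact hy h.symm
      rw [Finset.erase_eq_of_notMem hymem, Finset.erase_eq_of_notMem hxmem,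
        SimpleGraph.card_neighborFinset_eq_degree, if_neg hx, if_neg hy]
      ring

lemma castM1 : (M1 G : ℚ) = ∑ v : V, (G.degree v : ℚ) ^ 2 := by
  rw [M1, M1gen]; push_cast; rfl

lemma castF : (Fidx G : ℚ) = ∑ v : V, (G.degree v : ℚ) ^ 3 := by
  rw [Fidx, M1gen]; push_cast; rfl

lemma sum_if_adj (x : V) (h : V → ℚ) :
    ∑ v : V, (if G.Adj x v then h v else 0) = ∑ u ∈ G.neighborFinset x, h u := by
  rw [SimpleGraph.neighborFinset_eq_filter, Finset.sum_filter]

lemma M1_edel (hTF : ∀ {x y z : V}, G.Adj x y → G.Adj y z → G.Adj x z → False)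
    {x y : V} (hxy : G.Adj x y) :
    (M1 (edel G s(x, y)) : ℚ) = (M1 G : ℚ)
      - ((G.degree x : ℚ) ^ 2 + (G.degree y : ℚ) ^ 2)
      - 2 * ((∑ u ∈ G.neighborFinset x, (G.degree u : ℚ))
          + ∑ u ∈ G.neighborFinset y, (G.degree u : ℚ))
      + 3 * ((G.degree x : ℚ) + (G.degree y : ℚ)) - 2 := by
  set d : V → ℚ := fun v => (G.degree v : ℚ) with hd
  set χ : V → ℚ := fun v =>
    (if G.Adj x v then (1 : ℚ) else 0) + (if G.Adj y v then (1 : ℚ) else 0) with hχ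
  have key : ∀ v : V, ((edel G s(x, y)).degree v : ℚ) ^ 2
      = (d v ^ 2 - 2 * (d v * χ v) + χ v)
        - (if v = x then (d x - 1) ^ 2 else 0) - (if v = y then (d y - 1) ^ 2 else 0) := by
    intro v
    rw [edel_degree G hTF hxy v]
    by_cases h1 : v = x
    · subst h1
      rw [if_pos (Or.inl rfl), if_pos rfl, if_neg hxy.ne]
      have : χ v = 1 := by simp [hχ, G.irrefl, hxy.symm]
      rw [this]; ring
    · by_cases h2 : v = y
      · subst h2
        rw [if_pos (Or.inr rfl), if_neg h1, if_pos rfl]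
        have : χ v = 1 := by simp [hχ, G.irrefl, hxy]
        rw [this]; ring
      · rw [if_neg (by tauto), if_neg h1, if_neg h2]
        have hsq : χ v ^ 2 = χ v := by
          by_cases ha : G.Adj x v <;> by_cases hb : G.Adj y v
          · exact (hTF ha hb.symm hxy).elim
          all_goals simp [hχ, ha, hb]
        have : (d v - χ v) ^ 2 = d v ^ 2 - 2 * (d v * χ v) + χ v ^ 2 := by ring
        rw [this, hsq]
        ring
  have hM1c : (M1 (edel G s(x, y)) : ℚ) = ∑ v : V, ((edel G s(x, y)).degree v : ℚ) ^ 2 :=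
    castM1 _
  rw [hM1c]
  simp only [key]
  rw [Finset.sum_sub_distrib, Finset.sum_sub_distrib, Finset.sum_add_distrib,
    Finset.sum_sub_distrib, Finset.sum_ite_eq' univ x, Finset.sum_ite_eq' univ y,
    if_pos (mem_univ x), if_pos (mem_univ y)]
  have hA : ∑ v : V, d v ^ 2 = (M1 G : ℚ) := (castM1 G).symm
  have hB : ∑ v : V, d v * χ v
      = (∑ u ∈ G.neighborFinset x, d u) + ∑ u ∈ G.neighborFinset y, d u := by
    have : ∀ v : V, d v * χ v
        = (if G.Adj x v then d v else 0) + (if G.Adj y v then d v else 0) := by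
      intro v
      simp only [hχ, mul_add, mul_ite, mul_one, mul_zero]
    simp only [this]
    rw [Finset.sum_add_distrib, sum_if_adj, sum_if_adj]
  have hC : ∑ v : V, χ v = d x + d y := by
    simp only [hχ]
    rw [Finset.sum_add_distrib, sum_if_adj G x (fun _ => (1 : ℚ)),
      sum_if_adj G y (fun _ => (1 : ℚ)), Finset.sum_const, Finset.sum_const,
      nsmul_eq_mul, nsmul_eq_mul, SimpleGraph.card_neighborFinset_eq_degree,
      SimpleGraph.card_neighborFinset_eq_degree]
    simp [hd]
  rw [hA]
  have h2 : ∑ v : V, 2 * (d v * χ v) = 2 * ∑ v : V, d v * χ v := by rw [Finset.mul_sum]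
  rw [h2, hB, hC]
  ring

end Aux

theorem sum_M1_edge_deleted (V : Type*) [Fintype V] (G : SimpleGraph V)
    (hg : (4 : ℕ∞) ≤ G.egirth) (m : ℚ) (hm : m = G.edgeFinset.card) :
    (∑ e ∈ G.edgeFinset, (M1 (edel G e) : ℚ)) =
      (m + 3) * (M1 G : ℚ) - (Fidx G : ℚ) - 4 * (M2 G : ℚ) - 2 * m := by
  classical
  have hTF : ∀ {x y z : V}, G.Adj x y → G.Adj y z → G.Adj x z → False :=
    fun hxy hyz hxz => triangle_free_of_egirth G hg hxy hyz hxz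
  set d : V → ℚ := fun v => (G.degree v : ℚ) with hd
  set S : V → ℚ := fun v => ∑ u ∈ G.neighborFinset v, d u with hS
  have hgsym : ∀ u v : V,
      ((M1 G : ℚ) - (d u ^ 2 + d v ^ 2) - 2 * (S u + S v) + 3 * (d u + d v) - 2)
        = ((M1 G : ℚ) - (d v ^ 2 + d u ^ 2) - 2 * (S v + S u) + 3 * (d v + d u) - 2) :=
    fun u v => by ring
  have hrw : ∀ e ∈ G.edgeFinset, (M1 (edel G e) : ℚ) =
      Sym2.lift ⟨fun u v => (M1 G : ℚ) - (d u ^ 2 + d v ^ 2) - 2 * (S u + S v)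
        + 3 * (d u + d v) - 2, hgsym⟩ e := by
    intro e he
    induction e with
    | _ x y =>
      rw [SimpleGraph.mem_edgeFinset, SimpleGraph.mem_edgeSet] at he
      rw [Sym2.lift_mk]
      exact M1_edel G hTF he
  rw [Finset.sum_congr rfl hrw]
  have h2T := two_mul_sum_edges G _ hgsym
  -- degree sum
  have hdegsum : ∑ v : V, d v = 2 * m := by
    rw [hm]
    have := G.sum_degrees_eq_twice_card_edges
    push_cast [hd]
    exact_mod_cast congrArg (Nat.cast : ℕ → ℚ) this
  have hM1s : ∑ v : V, d v ^ 2 = (M1 G : ℚ) := (castM1 G).symm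
  have hFs : ∑ v : V, d v ^ 3 = (Fidx G : ℚ) := (castF G).symm
  -- M2
  have hmul : ∀ u v : V, d u * d v = d v * d u := fun u v => mul_comm _ _
  have castM2 : (M2 G : ℚ) = ∑ e ∈ G.edgeFinset, Sym2.lift ⟨fun u v => d u * d v, hmul⟩ e := by
    rw [M2]
    push_cast
    refine Finset.sum_congr rfl fun e _ => ?_
    induction e with
    | _ u v => simp [hd]
  have hM2s : ∑ v : V, d v * S v = 2 * (M2 G : ℚ) := by
    rw [castM2, two_mul_sum_edges G _ hmul]
    exact Finset.sum_congr rfl fun v _ => by rw [hS, Finset.mul_sum]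
  -- simplify the double sum
  have hinner : ∀ v : V, ∑ u ∈ G.neighborFinset v,
      ((M1 G : ℚ) - (d v ^ 2 + d u ^ 2) - 2 * (S v + S u) + 3 * (d v + d u) - 2)
      = d v * ((M1 G : ℚ) - d v ^ 2 - 2 * S v + 3 * d v - 2)
        + ∑ u ∈ G.neighborFinset v, (-(d u ^ 2) - 2 * S u + 3 * d u) := by
    intro v
    have hpt : ∀ u : V, ((M1 G : ℚ) - (d v ^ 2 + d u ^ 2) - 2 * (S v + S u)
        + 3 * (d v + d u) - 2)
        = ((M1 G : ℚ) - d v ^ 2 - 2 * S v + 3 * d v - 2)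
          + (-(d u ^ 2) - 2 * S u + 3 * d u) := fun u => by ring
    rw [Finset.sum_congr rfl fun u _ => hpt u, Finset.sum_add_distrib, Finset.sum_const,
      nsmul_eq_mul, SimpleGraph.card_neighborFinset_eq_degree]
  rw [Finset.sum_congr rfl fun v (_ : v ∈ univ) => hinner v, Finset.sum_add_distrib,
    sum_nbhd_swap G (fun u => -(d u ^ 2) - 2 * S u + 3 * d u)] at h2T
  have hmerge : ∀ v : V,
      d v * ((M1 G : ℚ) - d v ^ 2 - 2 * S v + 3 * d v - 2)
        + (G.degree v : ℚ) * (-(d v ^ 2) - 2 * S v + 3 * d v)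
      = ((M1 G : ℚ) - 2) * d v - 2 * d v ^ 3 - 4 * (d v * S v) + 6 * d v ^ 2 := by
    intro v
    have : (G.degree v : ℚ) = d v := rfl
    rw [this]; ring
  rw [← Finset.sum_add_distrib, Finset.sum_congr rfl fun v _ => hmerge v,
    Finset.sum_add_distrib, Finset.sum_sub_distrib, Finset.sum_sub_distrib,
    ← Finset.mul_sum, ← Finset.mul_sum, ← Finset.mul_sum, ← Finset.mul_sum,
    hdegsum, hM1s, hFs, hM2s] at h2T
  linarith [h2T]

end PaperMatching
end
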